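/- arXiv:2402.13084 — 2 statements merged into one kernel-verified Lean document; each statement's English description precedes it below -/
import Mathlib

section
/- Let n = 1, 0 < q < 1 < p < ∞ with 1/q = 1/p + 1/r, and for a positive integer l let g = Σ_{I ∈ D[0,1], |I| = 2^{-l}} |I|^{1/2} h_I. Then S_d(g) = χ_{[0,1]} (so ‖g‖_{Ḣ_d^r(ℝ)} = 1), while the formal adjoint π_g^t(f) = Σ_I ⟨f,h_I⟩⟨g,h_I⟩ χ_I/|I| satisfies: for every f with ‖f‖_{Λ̇^{1/q−1}_d(ℝ)} ≤ 1, |π_g^t(f)| ≤ 2^{l(1−1/q)} χ_{[0,1]} pointwise. -/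
/-
The intervals charged by `g` are the `2^l` dyadic intervals of length `2^{-l}` tiling `[0, 1)`, so
at each point `x` the series defining `S_d(g)(x)` and `π_g^t(f)(x)` have at most one nonzero
term, the one of the interval `I ∋ x` with `|I| = 2^{-l}`, and none if `x ∉ [0, 1)`. For `S_d(g)`
that term is `|I| / |I| = 1`. For `π_g^t(f)` it is `⟨f, h_I⟩ |I|^{-1/2}`, and since `h_I` has mean
zero and sup norm `|I|^{-1/2}`, `|⟨f, h_I⟩| ≤ |I|^{1/2} osc₁(f, I) ≤ |I|^{1/2} |I|^{1/q-1}`.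
-/

open MeasureTheory ENNReal
open scoped Classical

noncomputable section

/-- The dyadic interval `[2^k m, 2^k (m+1))` in `ℝ`. -/
def dInt (k m : ℤ) : Set ℝ :=
  Set.Ico ((2 : ℝ) ^ k * (m : ℝ)) ((2 : ℝ) ^ k * ((m : ℝ) + 1))

/-- The Haar function `h_I = |I|^{-1/2} (χ_{I⁻} - χ_{I⁺})` on the dyadic interval
`I = [2^k m, 2^k (m+1))`. -/
def haarI (k m : ℤ) (t : ℝ) : ℝ :=
  if (2 : ℝ) ^ k * (m : ℝ) ≤ t ∧ t < (2 : ℝ) ^ k * ((m : ℝ) + 1) then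
    ((2 : ℝ) ^ k) ^ (-(1 / 2 : ℝ)) *
      (if t < (2 : ℝ) ^ k * ((m : ℝ) + 1 / 2) then 1 else -1)
  else 0

/-- The `1`-mean oscillation of `f` over the dyadic interval indexed by `(k, m)`. -/
def dOsc (f : ℝ → ℝ) (k m : ℤ) : ℝ :=
  (volume (dInt k m)).toReal⁻¹ *
    ∫ t in dInt k m, |f t - (volume (dInt k m)).toReal⁻¹ * ∫ u in dInt k m, f u|

/-- The Haar coefficients of `g = Σ_{I ∈ D[0,1], |I| = 2^{-l}} |I|^{1/2} h_I`. -/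
def gcoef (l : ℕ) (c : ℤ × ℤ) : ℝ :=
  if c.1 = -(l : ℤ) ∧ 0 ≤ c.2 ∧ c.2 < 2 ^ l then Real.sqrt ((2 : ℝ) ^ (-(l : ℤ))) else 0

/-- The dyadic square function of `g`. -/
def sdg (l : ℕ) (x : ℝ) : ℝ :=
  Real.sqrt (∑' c : ℤ × ℤ,
    (gcoef l c) ^ 2 * (dInt c.1 c.2).indicator (fun _ => (1 : ℝ)) x / (2 : ℝ) ^ c.1)

/-- The formal adjoint `π_g^t(f) = Σ_I ⟨f,h_I⟩ ⟨g,h_I⟩ χ_I / |I|`. -/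
def piAdj (l : ℕ) (f : ℝ → ℝ) (x : ℝ) : ℝ :=
  ∑' c : ℤ × ℤ,
    (∫ t, f t * haarI c.1 c.2 t) * gcoef l c *
      (dInt c.1 c.2).indicator (fun _ => (1 : ℝ)) x / (2 : ℝ) ^ c.1

lemma volume_dInt (k m : ℤ) : volume (dInt k m) = ENNReal.ofReal ((2 : ℝ) ^ k) := by
  rw [dInt, Real.volume_Ico]
  ring_nf

lemma mem_dInt_iff {k m : ℤ} {x : ℝ} : x ∈ dInt k m ↔ ⌊x / (2 : ℝ) ^ k⌋ = m := by
  have hk : (0 : ℝ) < 2 ^ k := by positivity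
  rw [Int.floor_eq_iff, dInt, Set.mem_Ico, le_div_iff₀ hk, div_lt_iff₀ hk]
  constructor <;> rintro ⟨h₁, h₂⟩ <;> constructor <;> linarith

def dyadicIndex (l : ℕ) (x : ℝ) : ℤ × ℤ :=
  (-(l : ℤ), ⌊x / (2 : ℝ) ^ (-(l : ℤ))⌋)

lemma dyadicIndex_fst (l : ℕ) (x : ℝ) : (dyadicIndex l x).1 = -(l : ℤ) := rfl

lemma mem_dInt_dyadicIndex (l : ℕ) (x : ℝ) :
    x ∈ dInt (dyadicIndex l x).1 (dyadicIndex l x).2 :=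
  mem_dInt_iff.mpr rfl

lemma mem_Ico_zero_one_iff_of_mem_dInt {l : ℕ} {m : ℤ} {x : ℝ} (hx : x ∈ dInt (-(l : ℤ)) m) :
    x ∈ Set.Ico (0 : ℝ) 1 ↔ 0 ≤ m ∧ m < 2 ^ l := by
  have hl : (0 : ℝ) < 2 ^ l := by positivity
  rw [← mem_dInt_iff.mp hx, zpow_neg, zpow_natCast, div_inv_eq_mul, Int.floor_nonneg,
    Int.floor_lt, Set.mem_Ico]
  push_cast
  constructor <;> rintro ⟨h₀, h₁⟩ <;> constructor <;> nlinarith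

lemma gcoef_ne_zero_iff {l : ℕ} {c : ℤ × ℤ} :
    gcoef l c ≠ 0 ↔ c.1 = -(l : ℤ) ∧ 0 ≤ c.2 ∧ c.2 < 2 ^ l := by
  unfold gcoef
  split_ifs with h <;> simp [h]

lemma eq_dyadicIndex_of_gcoef_ne_zero {l : ℕ} {x : ℝ} {c : ℤ × ℤ} (hc : gcoef l c ≠ 0)
    (hx : x ∈ dInt c.1 c.2) : x ∈ Set.Ico (0 : ℝ) 1 ∧ c = dyadicIndex l x := by
  obtain ⟨h₁, h₂⟩ := gcoef_ne_zero_iff.mp hc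
  rw [h₁] at hx
  exact ⟨(mem_Ico_zero_one_iff_of_mem_dInt hx).mpr h₂, Prod.ext h₁ (mem_dInt_iff.mp hx).symm⟩

lemma gcoef_dyadicIndex {l : ℕ} {x : ℝ} (hx : x ∈ Set.Ico (0 : ℝ) 1) :
    gcoef l (dyadicIndex l x) = Real.sqrt ((2 : ℝ) ^ (-(l : ℤ))) :=
  if_pos ⟨rfl, (mem_Ico_zero_one_iff_of_mem_dInt (mem_dInt_dyadicIndex l x)).mp hx⟩

lemma tsum_eq_indicator_of_gcoef (l : ℕ) (x : ℝ) {F : ℤ × ℤ → ℝ}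
    (hF : ∀ c, gcoef l c = 0 ∨ x ∉ dInt c.1 c.2 → F c = 0) :
    ∑' c, F c = (Set.Ico (0 : ℝ) 1).indicator (fun _ => F (dyadicIndex l x)) x := by
  by_cases hx : x ∈ Set.Ico (0 : ℝ) 1
  · rw [Set.indicator_of_mem hx]
    refine tsum_eq_single _ fun c hc => hF c ?_
    by_contra! h
    exact hc (eq_dyadicIndex_of_gcoef_ne_zero h.1 h.2).2
  · rw [Set.indicator_of_notMem hx]
    refine (tsum_congr fun c => hF c ?_).trans tsum_zero
    by_contra! h
    exact hx (eq_dyadicIndex_of_gcoef_ne_zero h.1 h.2).1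

lemma rpow_neg_half_eq_inv_sqrt {a : ℝ} (ha : 0 ≤ a) : a ^ (-(1 / 2 : ℝ)) = (Real.sqrt a)⁻¹ := by
  rw [Real.rpow_neg ha, Real.sqrt_eq_rpow]

lemma haarI_eq_indicator_sub_indicator (k m : ℤ) :
    haarI k m =
      (Set.Ico ((2 : ℝ) ^ k * m) ((2 : ℝ) ^ k * (m + 1 / 2))).indicator
          (fun _ => (Real.sqrt ((2 : ℝ) ^ k))⁻¹) -
        (Set.Ico ((2 : ℝ) ^ k * (m + 1 / 2)) ((2 : ℝ) ^ k * (m + 1))).indicator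
          (fun _ => (Real.sqrt ((2 : ℝ) ^ k))⁻¹) := by
  have hk : (0 : ℝ) < 2 ^ k := by positivity
  ext t
  simp only [haarI, Pi.sub_apply, Set.indicator, Set.mem_Ico, rpow_neg_half_eq_inv_sqrt hk.le]
  split_ifs <;> grind

lemma integral_haarI (k m : ℤ) : ∫ t, haarI k m t = 0 := by
  have hint {a b c : ℝ} : Integrable ((Set.Ico a b).indicator fun _ => c) :=
    (integrableOn_const measure_Ico_lt_top.ne).integrable_indicator measurableSet_Ico
  rw [haarI_eq_indicator_sub_indicator, Pi.sub_def, integral_sub hint hint,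
    integral_indicator_const _ measurableSet_Ico, integral_indicator_const _ measurableSet_Ico,
    measureReal_def, measureReal_def, Real.volume_Ico, Real.volume_Ico, sub_eq_zero]
  ring_nf

lemma measurable_haarI (k m : ℤ) : Measurable (haarI k m) := by
  rw [haarI_eq_indicator_sub_indicator]
  exact (measurable_const.indicator measurableSet_Ico).sub
    (measurable_const.indicator measurableSet_Ico)

lemma abs_haarI_le (k m : ℤ) (t : ℝ) : |haarI k m t| ≤ (Real.sqrt ((2 : ℝ) ^ k))⁻¹ := by
  have hk : (0 : ℝ) < 2 ^ k := by positivity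
  simp only [haarI, rpow_neg_half_eq_inv_sqrt hk.le]
  split_ifs <;> simp [abs_of_nonneg (Real.sqrt_nonneg _)]

lemma haarI_eq_zero_of_notMem {k m : ℤ} {t : ℝ} (ht : t ∉ dInt k m) : haarI k m t = 0 := by
  rw [dInt, Set.mem_Ico] at ht
  simp [haarI, ht]

lemma setIntegral_dInt_eq_integral {k m : ℤ} {F : ℝ → ℝ} :
    ∫ t in dInt k m, F t * haarI k m t = ∫ t, F t * haarI k m t :=
  setIntegral_eq_integral_of_forall_compl_eq_zero fun t ht => by
    rw [haarI_eq_zero_of_notMem ht, mul_zero]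

lemma integral_abs_sub_average_dInt (f : ℝ → ℝ) (k m : ℤ) :
    ∫ t in dInt k m, |f t - (volume (dInt k m)).toReal⁻¹ * ∫ u in dInt k m, f u| =
      (2 : ℝ) ^ k * dOsc f k m := by
  have hk : (0 : ℝ) < 2 ^ k := by positivity
  rw [dOsc, volume_dInt, ENNReal.toReal_ofReal hk.le, mul_inv_cancel_left₀ hk.ne']

/-- Since `h_I` has mean zero, `f` may be replaced by `f` minus its average on `I`. -/
lemma abs_integral_mul_haarI_le {f : ℝ → ℝ} {k m : ℤ} (hf : IntegrableOn f (dInt k m)) :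
    |∫ t, f t * haarI k m t| ≤ Real.sqrt ((2 : ℝ) ^ k) * dOsc f k m := by
  have hk : (0 : ℝ) < 2 ^ k := by positivity
  set I := dInt k m
  set avg := (volume I).toReal⁻¹ * ∫ u in I, f u
  have hI : volume I ≠ ⊤ := by rw [volume_dInt]; exact ENNReal.ofReal_ne_top
  have hbound : ∀ᵐ t ∂volume.restrict I, ‖haarI k m t‖ ≤ (Real.sqrt ((2 : ℝ) ^ k))⁻¹ :=
    ae_of_all _ (abs_haarI_le k m)
  have hh := (measurable_haarI k m).aestronglyMeasurable (μ := volume.restrict I)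
  have hmean : ∫ t, f t * haarI k m t = ∫ t in I, (f t - avg) * haarI k m t := by
    simp only [sub_mul]
    rw [integral_sub (hf.mul_bdd hh hbound)
        (Integrable.mul_bdd (integrableOn_const (C := avg) hI) hh hbound),
      setIntegral_dInt_eq_integral, setIntegral_dInt_eq_integral, integral_const_mul,
      integral_haarI, mul_zero, sub_zero]
  have hosc : ∫ t in I, |f t - avg| * (Real.sqrt ((2 : ℝ) ^ k))⁻¹ =
      Real.sqrt ((2 : ℝ) ^ k) * dOsc f k m := by
    rw [integral_mul_const, integral_abs_sub_average_dInt]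
    field_simp
    rw [Real.sq_sqrt hk.le, mul_comm]
  rw [hmean, ← hosc, ← Real.norm_eq_abs]
  refine norm_integral_le_of_norm_le ((hf.sub (integrableOn_const hI)).abs.mul_const _)
    (ae_of_all _ fun t => ?_)
  rw [norm_mul, Real.norm_eq_abs]
  exact mul_le_mul_of_nonneg_left (abs_haarI_le k m t) (abs_nonneg _)

lemma sdg_eq_indicator (l : ℕ) (x : ℝ) :
    sdg l x = (Set.Ico (0 : ℝ) 1).indicator (fun _ => (1 : ℝ)) x := by
  have ha : (0 : ℝ) < 2 ^ (-(l : ℤ)) := by positivity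
  rw [sdg, tsum_eq_indicator_of_gcoef l x (by rintro c (h | h) <;> simp [h])]
  by_cases hx : x ∈ Set.Ico (0 : ℝ) 1
  · rw [Set.indicator_of_mem hx, Set.indicator_of_mem hx, gcoef_dyadicIndex hx,
      Set.indicator_of_mem (mem_dInt_dyadicIndex l x), dyadicIndex_fst, Real.sq_sqrt ha.le,
      mul_one, div_self ha.ne', Real.sqrt_one]
  · simp [hx]

lemma lintegral_ofReal_sdg_rpow (l : ℕ) {r : ℝ} (hr : 0 < r) :
    ∫⁻ x, ENNReal.ofReal (sdg l x) ^ r = 1 := by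
  have hpt : ∀ x, ENNReal.ofReal (sdg l x) ^ r = (Set.Ico (0 : ℝ) 1).indicator 1 x := by
    intro x
    by_cases hx : x ∈ Set.Ico (0 : ℝ) 1 <;> simp [sdg_eq_indicator, hx, hr]
  rw [lintegral_congr hpt, lintegral_indicator_one measurableSet_Ico, Real.volume_Ico]
  norm_num

lemma abs_piAdj_le (l : ℕ) {f : ℝ → ℝ} {s : ℝ} (hf : LocallyIntegrable f volume)
    (hΛ : ∀ k m : ℤ, ((2 : ℝ) ^ k) ^ (-s) * dOsc f k m ≤ 1) (x : ℝ) :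
    |piAdj l f x| ≤
      ((2 : ℝ) ^ (-(l : ℤ))) ^ s * (Set.Ico (0 : ℝ) 1).indicator (fun _ => (1 : ℝ)) x := by
  set a : ℝ := 2 ^ (-(l : ℤ))
  have ha : 0 < a := by positivity
  rw [piAdj, tsum_eq_indicator_of_gcoef l x (by rintro c (h | h) <;> simp [h])]
  by_cases hx : x ∈ Set.Ico (0 : ℝ) 1
  · set m := (dyadicIndex l x).2
    rw [Set.indicator_of_mem hx, Set.indicator_of_mem hx, gcoef_dyadicIndex hx,
      Set.indicator_of_mem (mem_dInt_dyadicIndex l x), dyadicIndex_fst, mul_one, mul_one]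
    have hcoef : |∫ t, f t * haarI (-(l : ℤ)) m t| ≤ Real.sqrt a * dOsc f (-(l : ℤ)) m :=
      abs_integral_mul_haarI_le
        ((hf.integrableOn_isCompact isCompact_Icc).mono_set Set.Ico_subset_Icc_self)
    have hosc : dOsc f (-(l : ℤ)) m ≤ a ^ s := by
      have := hΛ (-(l : ℤ)) m
      rwa [Real.rpow_neg ha.le, inv_mul_le_iff₀ (by positivity), mul_one] at this
    calc |(∫ t, f t * haarI (-(l : ℤ)) m t) * Real.sqrt a / a|
        = |∫ t, f t * haarI (-(l : ℤ)) m t| * Real.sqrt a / a := by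
          rw [abs_div, abs_mul, abs_of_nonneg (Real.sqrt_nonneg a), abs_of_pos ha]
      _ ≤ Real.sqrt a * dOsc f (-(l : ℤ)) m * Real.sqrt a / a := by gcongr
      _ = dOsc f (-(l : ℤ)) m := by
          rw [mul_right_comm, Real.mul_self_sqrt ha.le, mul_div_cancel_left₀ _ ha.ne']
      _ ≤ a ^ s := hosc
  · simp [hx]

theorem adjoint_paraproduct_example_general (q r : ℝ) (hr : 0 < r) (l : ℕ) :
    (∀ x : ℝ, sdg l x = (Set.Ico (0 : ℝ) 1).indicator (fun _ => (1 : ℝ)) x) ∧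
    (∫⁻ x, ENNReal.ofReal (sdg l x) ^ r) ^ (1 / r) = 1 ∧
    ∀ f : ℝ → ℝ, LocallyIntegrable f volume →
      (∀ k m : ℤ, ((2 : ℝ) ^ k) ^ (-(1 / q - 1)) * dOsc f k m ≤ 1) →
      ∀ x : ℝ, |piAdj l f x| ≤
        (2 : ℝ) ^ ((l : ℝ) * (1 - 1 / q)) *
          (Set.Ico (0 : ℝ) 1).indicator (fun _ => (1 : ℝ)) x := by
  refine ⟨sdg_eq_indicator l, by rw [lintegral_ofReal_sdg_rpow l hr, one_rpow], ?_⟩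
  intro f hf hΛ x
  have hlength : ((2 : ℝ) ^ (-(l : ℤ))) ^ (1 / q - 1) = (2 : ℝ) ^ ((l : ℝ) * (1 - 1 / q)) := by
    rw [← Real.rpow_intCast, ← Real.rpow_mul zero_le_two]
    push_cast
    ring_nf
  rw [← hlength]
  exact abs_piAdj_le l hf hΛ x

/-- for `0 < q < 1 < p < ∞`, `1/q = 1/p + 1/r` and `g` as above,
`S_d(g) = χ_{[0,1)}` (so `‖g‖_{Ḣ_d^r(ℝ)} = 1`), while for every locally integrable `f` with
`‖f‖_{Λ̇_d^{1/q-1}(ℝ)} ≤ 1` one has `|π_g^t(f)| ≤ 2^{l(1-1/q)} χ_{[0,1)}` pointwise. -/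
theorem adjoint_paraproduct_example (p q r : ℝ) (hq0 : 0 < q) (hq1 : q < 1) (hp1 : 1 < p)
    (hr : 0 < r) (hpqr : 1 / q = 1 / p + 1 / r) (l : ℕ) (hl : 0 < l) :
    (∀ x : ℝ, sdg l x = (Set.Ico (0 : ℝ) 1).indicator (fun _ => (1 : ℝ)) x) ∧
    (∫⁻ x, ENNReal.ofReal (sdg l x) ^ r) ^ (1 / r) = 1 ∧
    ∀ f : ℝ → ℝ, LocallyIntegrable f volume →
      (∀ k m : ℤ, ((2 : ℝ) ^ k) ^ (-(1 / q - 1)) * dOsc f k m ≤ 1) →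
      ∀ x : ℝ, |piAdj l f x| ≤
        (2 : ℝ) ^ ((l : ℝ) * (1 - 1 / q)) *
          (Set.Ico (0 : ℝ) 1).indicator (fun _ => (1 : ℝ)) x :=
  adjoint_paraproduct_example_general q r hr l
end
end

section
/- Let 0 < s < r < ∞, let h ∈ L^r(ℝⁿ), and let C be an η-sparse family of cubes. Then ‖Σ_{Q∈C} (⟨|h|^s⟩_Q)^{1/s} χ_Q‖_{L^r(ℝⁿ)} ≲ ‖h‖_{L^r(ℝⁿ)}, with implicit constant depending on n, s, r, η. -/
open MeasureTheory ENNReal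

noncomputable section

/-- A (half-open, axis-parallel) cube in `ℝⁿ`. -/
def IsCube {n : ℕ} (Q : Set (Fin n → ℝ)) : Prop :=
  ∃ (x : Fin n → ℝ) (l : ℝ), 0 < l ∧ Q = {y | ∀ j, x j ≤ y j ∧ y j < x j + l}

/-!
The core estimate is a finitary form of the Hardy–Littlewood maximal theorem, the Carleson
embedding `∑_Q ⟨g⟩_Q ^ p |E_Q| ≲ ∫ g ^ p` for `p > 1` and pairwise disjoint `E_Q ⊆ Q`. Group
the cubes by the dyadic size of `⟨g⟩_Q`, say `2t ≤ ⟨g⟩_Q ≤ 4t`; by the Vitali covering lemma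
the union of such cubes has measure `≲ t⁻¹ ∫_{g > t} g`, and summing over the dyadic `t` gives
a geometric series. With `g = |h| ^ s` and `p = r / s` it bounds `∑_Q ⟨|h| ^ s⟩_Q ^ (r / s) |E_Q|`
by `∫ |h| ^ r`.

It remains to bound `‖∑_Q a_Q χ_Q‖_r ^ r` by `∑_Q a_Q ^ r |E_Q|`. For `r ≤ 1` this is the
subadditivity of `t ↦ t ^ r` together with `|Q| ≤ η⁻¹ |E_Q|`. For `r > 1` write `F = ∑_Q a_Q χ_Q`
and `∫ F ^ r = ∑_Q a_Q |Q| ⟨F ^ (r - 1)⟩_Q`; after passing from `Q` to `E_Q` and applying Hölder,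
the Carleson embedding in `L^{r'}` for `F ^ (r - 1)` returns a factor `(∫ F ^ r) ^ (1 / r')` that
can be divided out. Infinite families follow by monotone convergence.
-/

open NNReal Set

namespace SparseAverage

section Auxiliary

variable {α ι : Type*}

lemma rpow_sub_one_mul_self {p : ℝ} (hp : 1 ≤ p) (a : ℝ≥0∞) : a ^ (p - 1) * a = a ^ p := by
  conv_rhs => rw [← sub_add_cancel p 1]
  rw [ENNReal.rpow_add_of_nonneg _ _ (sub_nonneg.mpr hp) zero_le_one, ENNReal.rpow_one]

lemma le_one_add_rpow {p : ℝ} (hp : 1 ≤ p) (a : ℝ≥0∞) : a ≤ 1 + a ^ p := by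
  rcases le_total a 1 with ha | ha
  · exact ha.trans le_self_add
  · calc a = a ^ (1 : ℝ) := (ENNReal.rpow_one a).symm
      _ ≤ a ^ p := ENNReal.rpow_le_rpow_of_exponent_le ha hp
      _ ≤ 1 + a ^ p := le_add_self

lemma rpow_sum_le_sum_rpow {p : ℝ} (hp0 : 0 < p) (hp1 : p ≤ 1) (S : Finset ι)
    (f : ι → ℝ≥0∞) : (∑ i ∈ S, f i) ^ p ≤ ∑ i ∈ S, f i ^ p := by
  classical
  induction S using Finset.induction with
  | empty => simp [zero_rpow_of_pos hp0]
  | insert i S hi ih =>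
    rw [Finset.sum_insert hi, Finset.sum_insert hi]
    exact (ENNReal.rpow_add_le_add_rpow _ _ hp0.le hp1).trans (by gcongr)

lemma mul_indicator_one_rpow {p : ℝ} (hp : 0 < p) (a : ℝ≥0∞) (s : Set α) (y : α) :
    (a * s.indicator (fun _ => 1) y) ^ p = a ^ p * s.indicator (fun _ => 1) y := by
  by_cases hy : y ∈ s <;> simp [hy, zero_rpow_of_pos hp]

lemma inner_le_weighted_Lp_mul_Lq {p q : ℝ} (hpq : p.HolderConjugate q) (S : Finset ι)
    (f g w : ι → ℝ≥0∞) :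
    ∑ i ∈ S, f i * g i * w i
      ≤ (∑ i ∈ S, f i ^ p * w i) ^ (1 / p) * (∑ i ∈ S, g i ^ q * w i) ^ (1 / q) := by
  have hfg : ∀ i, f i * w i ^ (1 / p) * (g i * w i ^ (1 / q)) = f i * g i * w i := fun i => by
    rw [mul_mul_mul_comm, ← rpow_add_of_nonneg _ _ hpq.one_div_nonneg hpq.symm.one_div_nonneg,
      one_div, one_div, hpq.inv_add_inv_eq_one, ENNReal.rpow_one]
  have hpow : ∀ {s : ℝ}, 0 < s → ∀ a b : ℝ≥0∞, (a * b ^ (1 / s)) ^ s = a ^ s * b := by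
    intro s hs a b
    rw [mul_rpow_of_nonneg _ _ hs.le, ← ENNReal.rpow_mul, one_div_mul_cancel hs.ne',
      ENNReal.rpow_one]
  simpa only [hfg, hpow hpq.pos, hpow hpq.symm.pos] using
    ENNReal.inner_le_Lp_mul_Lq S (fun i => f i * w i ^ (1 / p)) (fun i => g i * w i ^ (1 / q)) hpq

lemma le_rpow_of_le_mul_rpow {p q : ℝ} (hpq : p.HolderConjugate q) {X A : ℝ≥0∞} (hX : X ≠ ⊤)
    (h : X ≤ A * X ^ (1 / q)) : X ≤ A ^ p := by
  rcases eq_or_ne X 0 with rfl | hX0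
  · exact bot_le
  have hXq0 : X ^ (1 / q) ≠ 0 := (rpow_pos (pos_iff_ne_zero.mpr hX0) hX).ne'
  have hXqt : X ^ (1 / q) ≠ ⊤ := rpow_ne_top_of_nonneg hpq.symm.one_div_nonneg hX
  have h' : X ^ p⁻¹ * X ^ (1 / q) ≤ A * X ^ (1 / q) := by
    rwa [← ENNReal.rpow_add _ _ hX0 hX, one_div q, hpq.inv_add_inv_eq_one, ENNReal.rpow_one,
      ← one_div]
  exact (ENNReal.rpow_inv_le_iff hpq.pos).mp ((ENNReal.mul_le_mul_iff_left hXq0 hXqt).mp h')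

lemma two_mul_two_rpow (x : ℝ) : 2 * (2 : ℝ≥0∞) ^ x = 2 ^ (x + 1) := by
  rw [ENNReal.rpow_add _ _ two_ne_zero ofNat_ne_top, ENNReal.rpow_one, mul_comm]

lemma exists_two_rpow_mem_Icc {a : ℝ≥0∞} (h0 : a ≠ 0) (htop : a ≠ ⊤) :
    ∃ m : ℤ, a ∈ Icc (2 * 2 ^ (m : ℝ)) (4 * 2 ^ (m : ℝ)) := by
  have hzpow : ∀ j : ℤ, (((2 : ℝ≥0) ^ j : ℝ≥0) : ℝ≥0∞) = 2 ^ (j : ℝ) := fun j => by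
    rw [ENNReal.coe_zpow two_ne_zero, ← ENNReal.rpow_intCast]; norm_cast
  set k := Int.log 2 a.toNNReal
  have hlow : (2 : ℝ≥0∞) ^ (k : ℝ) ≤ a := by
    rw [← hzpow, ← coe_toNNReal htop]
    exact coe_le_coe.mpr (Int.zpow_log_le_self one_lt_two (toNNReal_pos h0 htop))
  have hhigh : a ≤ (2 : ℝ≥0∞) ^ ((k : ℝ) + 1) := by
    rw [← Int.cast_one, ← Int.cast_add, ← hzpow, ← coe_toNNReal htop]
    exact coe_le_coe.mpr (Int.lt_zpow_succ_log_self one_lt_two _).le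
  refine ⟨k - 1, ?_, ?_⟩
  · rwa [two_mul_two_rpow, Int.cast_sub, Int.cast_one, sub_add_cancel]
  · rwa [show (4 : ℝ≥0∞) = 2 * 2 by norm_num, mul_assoc, two_mul_two_rpow, two_mul_two_rpow,
      Int.cast_sub, Int.cast_one, sub_add_cancel]

lemma sum_two_rpow_rpow_le {q : ℝ} (hq : 0 < q) {K : Finset ℤ} {G : ℝ≥0∞}
    (hK : ∀ m ∈ K, (2 : ℝ≥0∞) ^ (m : ℝ) < G) :
    ∑ m ∈ K, ((2 : ℝ≥0∞) ^ (m : ℝ)) ^ q ≤ (1 - 2 ^ (-q))⁻¹ * G ^ q := by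
  rcases K.eq_empty_or_nonempty with rfl | hne
  · simp
  set M := K.max' hne
  have hM : ∀ m ∈ K, m ≤ M := fun m hm => K.le_max' m hm
  -- the terms are `2 ^ (M q)` times distinct powers of `2 ^ (-q)`
  have hterm : ∀ m ∈ K, ((2 : ℝ≥0∞) ^ (m : ℝ)) ^ q
      = ((2 : ℝ≥0∞) ^ (M : ℝ)) ^ q * ((2 : ℝ≥0∞) ^ (-q)) ^ (M - m).toNat := by
    intro m hm
    have hcast : (((M - m).toNat : ℕ) : ℝ) = M - m := by
      rw [← Int.cast_natCast, Int.toNat_of_nonneg (sub_nonneg.mpr (hM m hm))]; push_cast; ring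
    rw [← ENNReal.rpow_natCast, hcast, ← ENNReal.rpow_mul, ← ENNReal.rpow_mul,
      ← ENNReal.rpow_mul, ← ENNReal.rpow_add _ _ two_ne_zero ofNat_ne_top]
    ring_nf
  have hinj : InjOn (fun m => (M - m).toNat) K := by
    intro m hm m' hm' h
    have := hM m hm; have := hM m' hm'
    simp only at h
    omega
  calc ∑ m ∈ K, ((2 : ℝ≥0∞) ^ (m : ℝ)) ^ q
      = ((2 : ℝ≥0∞) ^ (M : ℝ)) ^ q *
          ∑ j ∈ K.image fun m => (M - m).toNat, ((2 : ℝ≥0∞) ^ (-q)) ^ j := by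
        rw [Finset.sum_image hinj, Finset.mul_sum]; exact Finset.sum_congr rfl hterm
    _ ≤ G ^ q * ∑' j : ℕ, ((2 : ℝ≥0∞) ^ (-q)) ^ j := by
        gcongr
        · exact (hK M (K.max'_mem hne)).le
        · exact ENNReal.sum_le_tsum _
    _ = (1 - 2 ^ (-q))⁻¹ * G ^ q := by rw [ENNReal.tsum_geometric, mul_comm]

lemma sum_two_rpow_rpow_mul_indicator_le {p : ℝ} (hp : 1 < p) (K : Finset ℤ) (g : α → ℝ≥0∞)
    (y : α) :
    ∑ m ∈ K, ((2 : ℝ≥0∞) ^ (m : ℝ)) ^ (p - 1) * {y | (2 : ℝ≥0∞) ^ (m : ℝ) < g y}.indicator g y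
      ≤ (1 - 2 ^ (1 - p))⁻¹ * g y ^ p := by
  classical
  calc ∑ m ∈ K, ((2 : ℝ≥0∞) ^ (m : ℝ)) ^ (p - 1) *
        {y | (2 : ℝ≥0∞) ^ (m : ℝ) < g y}.indicator g y
      = (∑ m ∈ K with (2 : ℝ≥0∞) ^ ((m : ℤ) : ℝ) < g y, ((2 : ℝ≥0∞) ^ (m : ℝ)) ^ (p - 1))
          * g y := by
        rw [Finset.sum_filter, Finset.sum_mul]
        refine Finset.sum_congr rfl fun m _ => ?_
        simp only [indicator_apply, mem_ofPred_eq]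
        split_ifs <;> simp
    _ ≤ (1 - 2 ^ (-(p - 1)))⁻¹ * g y ^ (p - 1) * g y := by
        gcongr
        exact sum_two_rpow_rpow_le (by linarith) fun m hm => (Finset.mem_filter.mp hm).2
    _ = (1 - 2 ^ (1 - p))⁻¹ * g y ^ p := by
        rw [neg_sub, mul_assoc, rpow_sub_one_mul_self hp.le]

variable [MeasurableSpace α] {μ : Measure α}

lemma setLIntegral_ne_top_of_lintegral_rpow_ne_top {s : Set α} {g : α → ℝ≥0∞} {p : ℝ}
    (hp : 1 ≤ p) (hs : μ s ≠ ⊤) (hg : ∫⁻ y, g y ^ p ∂μ ≠ ⊤) : ∫⁻ y in s, g y ∂μ ≠ ⊤ := by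
  refine ne_top_of_le_ne_top ?_ (lintegral_mono fun y => le_one_add_rpow hp (g y))
  rw [lintegral_add_left measurable_const, setLIntegral_const, one_mul]
  exact add_ne_top.mpr ⟨hs, ne_top_of_le_ne_top hg (setLIntegral_le_lintegral _ _)⟩

lemma mul_measure_le_setLIntegral_indicator {s : Set α} {g : α → ℝ≥0∞} {t : ℝ≥0∞}
    (hs : μ s ≠ ⊤) (ht : t ≠ ⊤) (h : 2 * t * μ s ≤ ∫⁻ y in s, g y ∂μ) :
    t * μ s ≤ ∫⁻ y in s, {y | t < g y}.indicator g y ∂μ := by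
  have hg : ∀ y, g y ≤ {y | t < g y}.indicator g y + t := by
    intro y
    by_cases hy : t < g y
    · rw [indicator_of_mem (show y ∈ {y | t < g y} from hy)]; exact le_self_add
    · exact (not_lt.mp hy).trans le_add_self
  have hsplit : ∫⁻ y in s, g y ∂μ ≤ (∫⁻ y in s, {y | t < g y}.indicator g y ∂μ) + t * μ s := by
    calc ∫⁻ y in s, g y ∂μ ≤ ∫⁻ y in s, ({y | t < g y}.indicator g y + t) ∂μ := lintegral_mono hg
      _ = _ := by rw [lintegral_add_right _ measurable_const, setLIntegral_const]
  rw [two_mul, add_mul] at h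
  exact (ENNReal.add_le_add_iff_right (mul_ne_top ht hs)).mp (h.trans hsplit)

lemma lintegral_sum_mul_indicator_one (S : Finset ι) {A : ι → Set α}
    (hA : ∀ i ∈ S, MeasurableSet (A i)) (c : ι → ℝ≥0∞) :
    ∫⁻ y, ∑ i ∈ S, c i * (A i).indicator (fun _ => 1) y ∂μ = ∑ i ∈ S, c i * μ (A i) := by
  rw [lintegral_finsetSum _ fun i hi => (measurable_const.indicator (hA i hi)).const_mul _]
  refine Finset.sum_congr rfl fun i hi => ?_
  rw [lintegral_const_mul _ (measurable_const.indicator (hA i hi)),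
    lintegral_indicator_const (hA i hi), one_mul]

lemma lintegral_rpow_sum_mul_indicator_ne_top {r : ℝ} (hr : 1 ≤ r) (S : Finset ι)
    {A : ι → Set α} (hA : ∀ i ∈ S, MeasurableSet (A i)) (hμA : ∀ i ∈ S, μ (A i) ≠ ⊤)
    {a : ι → ℝ≥0∞} (ha : ∀ i ∈ S, a i ≠ ⊤) :
    ∫⁻ y, (∑ i ∈ S, a i * (A i).indicator (fun _ => 1) y) ^ r ∂μ ≠ ⊤ := by
  have hcard : (S.card : ℝ≥0∞) ^ (r - 1) ≠ ⊤ :=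
    rpow_ne_top_of_nonneg (by linarith) (natCast_ne_top _)
  have hbound : ∀ y, (∑ i ∈ S, a i * (A i).indicator (fun _ => 1) y) ^ r ≤
      (S.card : ℝ≥0∞) ^ (r - 1) * ∑ i ∈ S, a i ^ r * (A i).indicator (fun _ => 1) y := fun y => by
    simpa only [mul_indicator_one_rpow (by linarith : (0 : ℝ) < r)] using
      rpow_sum_le_const_mul_sum_rpow S (fun i => a i * (A i).indicator (fun _ => 1) y) hr
  refine ne_top_of_le_ne_top ?_ (lintegral_mono hbound)
  rw [lintegral_const_mul' _ _ hcard, lintegral_sum_mul_indicator_one S hA]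
  exact mul_ne_top hcard (ENNReal.sum_ne_top.mpr fun i hi =>
    mul_ne_top (rpow_ne_top_of_nonneg (by linarith) (ha i hi)) (hμA i hi))

lemma lintegral_rpow_eq_sum_mul_setLAverage {r : ℝ} (hr : 1 ≤ r) (S : Finset ι)
    {A : ι → Set α} (hA : ∀ i ∈ S, MeasurableSet (A i)) (hμA : ∀ i ∈ S, μ (A i) ≠ ⊤)
    (a : ι → ℝ≥0∞) {F : α → ℝ≥0∞} (hF : ∀ y, F y = ∑ i ∈ S, a i * (A i).indicator (fun _ => 1) y) :
    ∫⁻ y, F y ^ r ∂μ = ∑ i ∈ S, a i * (μ (A i) * ⨍⁻ y in A i, F y ^ (r - 1) ∂μ) := by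
  have hFm : Measurable F := by
    rw [funext hF]
    exact Finset.measurable_fun_sum _ fun i hi =>
      (measurable_const.indicator (hA i hi)).const_mul _
  have hpt : ∀ y, F y ^ r = ∑ i ∈ S, a i * (A i).indicator (fun y => F y ^ (r - 1)) y := by
    intro y
    rw [← rpow_sub_one_mul_self hr]
    nth_rw 2 [hF y]
    rw [Finset.mul_sum]
    refine Finset.sum_congr rfl fun i _ => ?_
    by_cases hy : y ∈ A i <;> simp [hy, mul_comm]
  have hmeas : ∀ i ∈ S, Measurable ((A i).indicator fun y => F y ^ (r - 1)) :=
    fun i hi => (hFm.pow_const (r - 1)).indicator (hA i hi)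
  rw [lintegral_congr hpt, lintegral_finsetSum _ fun i hi => (hmeas i hi).const_mul _]
  refine Finset.sum_congr rfl fun i hi => ?_
  rw [lintegral_const_mul _ (hmeas i hi), lintegral_indicator (hA i hi),
    measure_mul_setLAverage _ (hμA i hi)]

lemma lintegral_tsum_rpow_le_of_forall_finset [Countable ι] {F : ι → α → ℝ≥0∞}
    (hF : ∀ i, AEMeasurable (F i) μ) {r : ℝ} (hr : 0 < r) {B : ℝ≥0∞}
    (h : ∀ S : Finset ι, ∫⁻ y, (∑ i ∈ S, F i y) ^ r ∂μ ≤ B) :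
    ∫⁻ y, (∑' i, F i y) ^ r ∂μ ≤ B := by
  have hsup : ∀ y, (∑' i, F i y) ^ r = ⨆ S : Finset ι, (∑ i ∈ S, F i y) ^ r := fun y => by
    rw [ENNReal.tsum_eq_iSup_sum]
    exact Monotone.map_iSup_of_continuousAt ENNReal.continuous_rpow_const.continuousAt
      (ENNReal.monotone_rpow_of_nonneg hr.le) (zero_rpow_of_pos hr)
  have hmono : Monotone fun (S : Finset ι) y => (∑ i ∈ S, F i y) ^ r :=
    fun S T hST y => ENNReal.rpow_le_rpow (Finset.sum_le_sum_of_subset hST) hr.le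
  rw [lintegral_congr hsup, lintegral_iSup_directed
    (fun S => (S.aemeasurable_fun_sum fun i _ => hF i).pow_const r) hmono.directed_le]
  exact iSup_le h

end Auxiliary

variable {n : ℕ} {ι : Type*}

def cube (x : Fin n → ℝ) (l : ℝ) : Set (Fin n → ℝ) :=
  {y | ∀ j, x j ≤ y j ∧ y j < x j + l}

lemma cube_eq_pi (x : Fin n → ℝ) (l : ℝ) :
    cube x l = univ.pi fun j => Ico (x j) (x j + l) := by
  ext y; simp [cube, mem_pi]

lemma measurableSet_cube (x : Fin n → ℝ) (l : ℝ) : MeasurableSet (cube x l) := by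
  rw [cube_eq_pi]; exact MeasurableSet.univ_pi fun _ => measurableSet_Ico

lemma volume_cube (x : Fin n → ℝ) (l : ℝ) : volume (cube x l) = ENNReal.ofReal l ^ n := by
  simp [cube_eq_pi, volume_pi_pi, Real.volume_Ico]

lemma volume_cube_ne_zero (x : Fin n → ℝ) {l : ℝ} (hl : 0 < l) : volume (cube x l) ≠ 0 := by
  simp [volume_cube, hl]

lemma volume_cube_ne_top (x : Fin n → ℝ) (l : ℝ) : volume (cube x l) ≠ ⊤ := by
  simp [volume_cube]

lemma volume_enlarged_cube (x : Fin n → ℝ) (l : ℝ) :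
    volume (cube (fun j => x j - 2 * l) (5 * l)) = 5 ^ n * volume (cube x l) := by
  rw [volume_cube, volume_cube, ENNReal.ofReal_mul (by norm_num), mul_pow]
  norm_num

lemma cube_subset_enlarged_cube {x x' : Fin n → ℝ} {l l' : ℝ} (hl : l' ≤ 2 * l)
    (hne : (cube x' l' ∩ cube x l).Nonempty) :
    cube x' l' ⊆ cube (fun j => x j - 2 * l) (5 * l) := by
  obtain ⟨z, hz', hz⟩ := hne
  intro y hy j
  have := hz j; have := hz' j; have := hy j
  constructor <;> linarith

/-- The family `E i ⊆ Q i = cube (x i) (l i)`, `i ∈ S`, is `η`-sparse. For `η = 0` only the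
disjointness remains, which is all the Carleson embedding needs. -/
structure IsSparse (η : ℝ≥0∞) (S : Finset ι) (x : ι → Fin n → ℝ) (l : ι → ℝ)
    (E : ι → Set (Fin n → ℝ)) : Prop where
  pos : ∀ i ∈ S, 0 < l i
  measurableSet : ∀ i ∈ S, MeasurableSet (E i)
  subset_cube : ∀ i ∈ S, E i ⊆ cube (x i) (l i)
  pairwiseDisjoint : (S : Set ι).PairwiseDisjoint E
  mul_volume_le : ∀ i ∈ S, η * volume (cube (x i) (l i)) ≤ volume (E i)

namespace IsSparse

variable {η : ℝ≥0∞} {S T : Finset ι} {x : ι → Fin n → ℝ} {l : ι → ℝ} {E : ι → Set (Fin n → ℝ)}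

lemma mono (hS : IsSparse η S x l E) (hT : T ⊆ S) : IsSparse η T x l E where
  pos i hi := hS.pos i (hT hi)
  measurableSet i hi := hS.measurableSet i (hT hi)
  subset_cube i hi := hS.subset_cube i (hT hi)
  pairwiseDisjoint := hS.pairwiseDisjoint.subset (Finset.coe_subset.mpr hT)
  mul_volume_le i hi := hS.mul_volume_le i (hT hi)

lemma zero (hS : IsSparse η S x l E) : IsSparse 0 S x l E :=
  { hS with mul_volume_le := fun i _ => by rw [zero_mul]; exact bot_le }

lemma volume_cube_le (hS : IsSparse η S x l E) (hη : η ≠ 0) (hη' : η ≠ ⊤) {i : ι} (hi : i ∈ S) :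
    volume (cube (x i) (l i)) ≤ η⁻¹ * volume (E i) :=
  (mul_le_iff_le_inv hη hη').mp (hS.mul_volume_le i hi)

lemma volume_ne_zero (hS : IsSparse η S x l E) (hη : η ≠ 0) {i : ι} (hi : i ∈ S) :
    volume (E i) ≠ 0 :=
  ((ENNReal.mul_pos hη (volume_cube_ne_zero _ (hS.pos i hi))).trans_le (hS.mul_volume_le i hi)).ne'

end IsSparse

/-- Vitali covering: the cubes are covered by the fivefold enlargements of a disjoint
subfamily, over which the hypothesis can be summed. -/
lemma mul_volume_biUnion_cube_le (g : (Fin n → ℝ) → ℝ≥0∞) (S : Finset ι)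
    (x : ι → Fin n → ℝ) (l : ι → ℝ) (hl : ∀ i ∈ S, 0 < l i) {t : ℝ≥0∞}
    (ht : ∀ i ∈ S, t * volume (cube (x i) (l i)) ≤ ∫⁻ y in cube (x i) (l i), g y) :
    t * volume (⋃ i ∈ S, cube (x i) (l i)) ≤ 5 ^ n * ∫⁻ y, g y := by
  classical
  obtain ⟨u, huS, hdisj, hcov⟩ := Vitali.exists_disjoint_subfamily_covering_enlargement
    (fun i => cube (x i) (l i)) S l 2 one_lt_two (fun i hi => (hl i hi).le)
    (∑ i ∈ S, l i) (fun i hi => Finset.single_le_sum (fun j hj => (hl j hj).le) hi)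
    (fun i hi => ⟨x i, fun j => ⟨le_rfl, by linarith [hl i hi]⟩⟩)
  set D := ((S : Set ι).toFinite.subset huS).toFinset
  have hD : ∀ j ∈ D, j ∈ S := fun j hj => huS ((Finite.mem_toFinset _).mp hj)
  have hcover : (⋃ i ∈ S, cube (x i) (l i)) ⊆
      ⋃ j ∈ D, cube (fun m => x j m - 2 * l j) (5 * l j) := by
    refine iUnion₂_subset fun i hi => ?_
    obtain ⟨j, hj, hne, hlj⟩ := hcov i hi
    exact (cube_subset_enlarged_cube hlj hne).trans
      (subset_biUnion_of_mem (u := fun j => cube (fun m => x j m - 2 * l j) (5 * l j))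
        ((Finite.mem_toFinset _).mpr hj))
  calc t * volume (⋃ i ∈ S, cube (x i) (l i))
      ≤ t * ∑ j ∈ D, volume (cube (fun m => x j m - 2 * l j) (5 * l j)) := by
        gcongr; exact (measure_mono hcover).trans (measure_biUnion_finset_le _ _)
    _ = 5 ^ n * ∑ j ∈ D, t * volume (cube (x j) (l j)) := by
        simp only [Finset.mul_sum, volume_enlarged_cube]
        exact Finset.sum_congr rfl fun j _ => by ring
    _ ≤ 5 ^ n * ∑ j ∈ D, ∫⁻ y in cube (x j) (l j), g y := by
        gcongr with j hj
        exact ht j (hD j hj)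
    _ ≤ 5 ^ n * ∫⁻ y, g y := by
        rw [← lintegral_biUnion_finset (by simpa [D] using hdisj)
          (fun j _ => measurableSet_cube _ _)]
        exact mul_le_mul_right (setLIntegral_le_lintegral _ _) _

section Carleson

variable {S : Finset ι} {x : ι → Fin n → ℝ} {l : ι → ℝ} {E : ι → Set (Fin n → ℝ)}

lemma mul_sum_volume_le_of_two_mul_le (g : (Fin n → ℝ) → ℝ≥0∞) (hS : IsSparse 0 S x l E)
    {t : ℝ≥0∞} (ht : t ≠ ⊤) (h : ∀ i ∈ S, 2 * t ≤ ⨍⁻ y in cube (x i) (l i), g y ∂volume) :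
    t * ∑ i ∈ S, volume (E i) ≤ 5 ^ n * ∫⁻ y, {y | t < g y}.indicator g y := by
  rw [← measure_biUnion_finset hS.pairwiseDisjoint hS.measurableSet]
  calc t * volume (⋃ i ∈ S, E i) ≤ t * volume (⋃ i ∈ S, cube (x i) (l i)) := by
        gcongr with i hi; exact hS.subset_cube i hi
    _ ≤ _ := by
        refine mul_volume_biUnion_cube_le _ S x l hS.pos fun i hi =>
          mul_measure_le_setLIntegral_indicator (volume_cube_ne_top _ _) ht ?_
        rw [← measure_mul_setLAverage _ (volume_cube_ne_top _ _), mul_comm]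
        gcongr
        exact h i hi

lemma sum_rpow_mul_volume_le_of_mem_Icc {p : ℝ} (hp : 1 ≤ p) (g : (Fin n → ℝ) → ℝ≥0∞)
    (hS : IsSparse 0 S x l E) {t : ℝ≥0∞} (ht : t ≠ ⊤)
    (h : ∀ i ∈ S, ⨍⁻ y in cube (x i) (l i), g y ∂volume ∈ Icc (2 * t) (4 * t)) :
    ∑ i ∈ S, (⨍⁻ y in cube (x i) (l i), g y ∂volume) ^ p * volume (E i)
      ≤ 4 ^ p * 5 ^ n * (t ^ (p - 1) * ∫⁻ y, {y | t < g y}.indicator g y) := by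
  calc ∑ i ∈ S, (⨍⁻ y in cube (x i) (l i), g y ∂volume) ^ p * volume (E i)
      ≤ ∑ i ∈ S, (4 * t) ^ p * volume (E i) := by
        gcongr with i hi; exact (h i hi).2
    _ = 4 ^ p * t ^ (p - 1) * (t * ∑ i ∈ S, volume (E i)) := by
        rw [← Finset.mul_sum, mul_rpow_of_nonneg _ _ (by linarith), ← rpow_sub_one_mul_self hp t]
        ring
    _ ≤ 4 ^ p * t ^ (p - 1) * (5 ^ n * ∫⁻ y, {y | t < g y}.indicator g y) :=
        mul_le_mul_right (mul_sum_volume_le_of_two_mul_le g hS ht fun i hi => (h i hi).1) _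
    _ = _ := by ring

/-- `4 ^ p` comes from the dyadic grouping, `5 ^ n` from the Vitali enlargement and the last
factor from the geometric series. -/
def carlesonConst (n : ℕ) (p : ℝ) : ℝ≥0∞ := 4 ^ p * 5 ^ n * (1 - 2 ^ (1 - p))⁻¹

lemma carlesonConst_ne_zero (n : ℕ) (p : ℝ) : carlesonConst n p ≠ 0 := by
  have : (4 : ℝ≥0∞) ^ p ≠ 0 := (ENNReal.rpow_pos (by norm_num) (by norm_num)).ne'
  simp [carlesonConst, this]

lemma carlesonConst_ne_top (n : ℕ) {p : ℝ} (hp : 1 < p) : carlesonConst n p ≠ ⊤ := by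
  have h4 : (4 : ℝ≥0∞) ^ p ≠ ⊤ := rpow_ne_top_of_nonneg (by linarith) (by norm_num)
  have h2 : (2 : ℝ≥0∞) ^ (1 - p) < 1 := rpow_lt_one_of_one_lt_of_neg one_lt_two (by linarith)
  exact mul_ne_top (mul_ne_top h4 (pow_ne_top ofNat_ne_top))
    (inv_ne_top.mpr (tsub_pos_of_lt h2).ne')

lemma sum_setLAverage_rpow_mul_volume_le_of_measurable {p : ℝ} (hp : 1 < p)
    {g : (Fin n → ℝ) → ℝ≥0∞} (hg : Measurable g) (hS : IsSparse 0 S x l E) :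
    ∑ i ∈ S, (⨍⁻ y in cube (x i) (l i), g y ∂volume) ^ p * volume (E i)
      ≤ carlesonConst n p * ∫⁻ y, g y ^ p := by
  classical
  set A := fun i => ⨍⁻ y in cube (x i) (l i), g y ∂volume
  by_cases hgp : ∫⁻ y, g y ^ p = ⊤
  · rw [hgp, mul_top (carlesonConst_ne_zero n p)]; exact le_top
  set S' := S.filter (A · ≠ 0)
  have hlevel : ∀ i ∈ S', ∃ m : ℤ, A i ∈ Icc (2 * 2 ^ (m : ℝ)) (4 * 2 ^ (m : ℝ)) := by
    intro i hi
    refine exists_two_rpow_mem_Icc (Finset.mem_filter.mp hi).2 (setLAverage_lt_top ?_).ne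
    exact setLIntegral_ne_top_of_lintegral_rpow_ne_top hp.le (volume_cube_ne_top _ _) hgp
  choose! k hk using hlevel
  set K := S'.image k
  set gK := fun (m : ℤ) y => {y | (2 : ℝ≥0∞) ^ (m : ℝ) < g y}.indicator g y
  have hgK : ∀ m, Measurable (gK m) :=
    fun m => hg.indicator (measurableSet_lt measurable_const hg)
  calc ∑ i ∈ S, A i ^ p * volume (E i)
      = ∑ i ∈ S', A i ^ p * volume (E i) := by
        refine (Finset.sum_filter_of_ne fun i _ h h0 => ?_).symm
        rw [h0, zero_rpow_of_pos (by linarith), zero_mul] at h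
        exact h rfl
    _ = ∑ m ∈ K, ∑ i ∈ S' with k i = m, A i ^ p * volume (E i) :=
        (Finset.sum_fiberwise_of_maps_to (fun i hi => Finset.mem_image_of_mem k hi) _).symm
    _ ≤ ∑ m ∈ K, 4 ^ p * 5 ^ n * (((2 : ℝ≥0∞) ^ (m : ℝ)) ^ (p - 1) * ∫⁻ y, gK m y) := by
        refine Finset.sum_le_sum fun m _ => sum_rpow_mul_volume_le_of_mem_Icc hp.le g
          (hS.mono fun i hi => (Finset.mem_filter.mp (Finset.mem_filter.mp hi).1).1)
          (rpow_ne_top_of_nonneg' two_pos ofNat_ne_top) fun i hi => ?_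
        obtain ⟨hiS', rfl⟩ := Finset.mem_filter.mp hi
        exact hk i hiS'
    _ = 4 ^ p * 5 ^ n * ∫⁻ y, ∑ m ∈ K, ((2 : ℝ≥0∞) ^ (m : ℝ)) ^ (p - 1) * gK m y := by
        rw [lintegral_finsetSum _ fun m _ => (hgK m).const_mul _, Finset.mul_sum]
        simp_rw [lintegral_const_mul _ (hgK _)]
    _ ≤ 4 ^ p * 5 ^ n * ∫⁻ y, (1 - 2 ^ (1 - p))⁻¹ * g y ^ p := by
        gcongr with y; exact sum_two_rpow_rpow_mul_indicator_le hp K g y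
    _ = carlesonConst n p * ∫⁻ y, g y ^ p := by
        rw [lintegral_const_mul _ (hg.pow_const _), carlesonConst]
        ring

lemma sum_setLAverage_rpow_mul_volume_le {p : ℝ} (hp : 1 < p) {g : (Fin n → ℝ) → ℝ≥0∞}
    (hg : AEMeasurable g) (hS : IsSparse 0 S x l E) :
    ∑ i ∈ S, (⨍⁻ y in cube (x i) (l i), g y ∂volume) ^ p * volume (E i)
      ≤ carlesonConst n p * ∫⁻ y, g y ^ p := by
  calc ∑ i ∈ S, (⨍⁻ y in cube (x i) (l i), g y ∂volume) ^ p * volume (E i)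
      = ∑ i ∈ S, (⨍⁻ y in cube (x i) (l i), hg.mk g y ∂volume) ^ p * volume (E i) := by
        simp only [laverage_congr (ae_restrict_of_ae hg.ae_eq_mk)]
    _ ≤ carlesonConst n p * ∫⁻ y, hg.mk g y ^ p :=
        sum_setLAverage_rpow_mul_volume_le_of_measurable hp hg.measurable_mk hS
    _ = carlesonConst n p * ∫⁻ y, g y ^ p := by
        congr 1
        exact lintegral_congr_ae (hg.ae_eq_mk.mono fun y hy => by simp only [hy])

end Carleson

section Sparse

variable {η : ℝ≥0∞} {S : Finset ι} {x : ι → Fin n → ℝ} {l : ι → ℝ} {E : ι → Set (Fin n → ℝ)}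

lemma lintegral_sum_indicator_rpow_le_of_le_one {r : ℝ} (hr0 : 0 < r) (hr1 : r ≤ 1)
    (hη : η ≠ 0) (hη' : η ≠ ⊤) (hS : IsSparse η S x l E) (a : ι → ℝ≥0∞) :
    ∫⁻ y, (∑ i ∈ S, a i * (cube (x i) (l i)).indicator (fun _ => 1) y) ^ r
      ≤ η⁻¹ * ∑ i ∈ S, a i ^ r * volume (E i) := by
  calc ∫⁻ y, (∑ i ∈ S, a i * (cube (x i) (l i)).indicator (fun _ => 1) y) ^ r
      ≤ ∫⁻ y, ∑ i ∈ S, a i ^ r * (cube (x i) (l i)).indicator (fun _ => 1) y := by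
        refine lintegral_mono fun y => (rpow_sum_le_sum_rpow hr0 hr1 S _).trans_eq ?_
        simp only [mul_indicator_one_rpow hr0]
    _ = ∑ i ∈ S, a i ^ r * volume (cube (x i) (l i)) :=
        lintegral_sum_mul_indicator_one S (fun i _ => measurableSet_cube _ _) _
    _ ≤ ∑ i ∈ S, a i ^ r * (η⁻¹ * volume (E i)) := by
        gcongr with i hi; exact hS.volume_cube_le hη hη' hi
    _ = η⁻¹ * ∑ i ∈ S, a i ^ r * volume (E i) := by
        rw [Finset.mul_sum]; exact Finset.sum_congr rfl fun i _ => by ring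

lemma lintegral_sum_indicator_rpow_le_of_one_lt {r : ℝ} (hr : 1 < r) (hη : η ≠ 0)
    (hη' : η ≠ ⊤) (hS : IsSparse η S x l E) (a : ι → ℝ≥0∞) :
    ∫⁻ y, (∑ i ∈ S, a i * (cube (x i) (l i)).indicator (fun _ => 1) y) ^ r
      ≤ (η⁻¹ * carlesonConst n r.conjExponent ^ (1 / r.conjExponent)) ^ r *
          ∑ i ∈ S, a i ^ r * volume (E i) := by
  set r' := r.conjExponent
  have hrr' : r.HolderConjugate r' := .conjExponent hr
  set C := η⁻¹ * carlesonConst n r' ^ (1 / r')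
  set Y := ∑ i ∈ S, a i ^ r * volume (E i)
  set F := fun y => ∑ i ∈ S, a i * (cube (x i) (l i)).indicator (fun _ => 1) y
  by_cases ha : ∃ i ∈ S, a i = ⊤
  · obtain ⟨i, hi, hai⟩ := ha
    have hY : Y = ⊤ := ENNReal.sum_eq_top.mpr ⟨i, hi, by
      rw [hai, top_rpow_of_pos (by linarith), top_mul (hS.volume_ne_zero hη hi)]⟩
    have hC : C ^ r ≠ 0 := by
      simp [C, hη', carlesonConst_ne_zero, carlesonConst_ne_top n hrr'.symm.lt,
        hrr'.symm.pos.not_gt, (by linarith : ¬ r < 0)]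
    rw [hY, mul_top hC]; exact le_top
  push Not at ha
  set X := ∫⁻ y, F y ^ r
  set b := fun i => ⨍⁻ y in cube (x i) (l i), F y ^ (r - 1) ∂volume
  have hX : X ≠ ⊤ := lintegral_rpow_sum_mul_indicator_ne_top hr.le S
    (fun i _ => measurableSet_cube _ _) (fun i _ => volume_cube_ne_top _ _) ha
  have hF : Measurable F := Finset.measurable_fun_sum _ fun i _ =>
    (measurable_const.indicator (measurableSet_cube _ _)).const_mul _
  have hcarleson : ∑ i ∈ S, b i ^ r' * volume (E i) ≤ carlesonConst n r' * X := by
    have h := sum_setLAverage_rpow_mul_volume_le hrr'.symm.lt (hF.pow_const (r - 1)).aemeasurable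
      hS.zero
    rwa [lintegral_congr fun y => by rw [← ENNReal.rpow_mul, hrr'.sub_one_mul_conj]] at h
  have hmain : X ≤ C * Y ^ (1 / r) * X ^ (1 / r') := by
    calc X = ∑ i ∈ S, a i * (volume (cube (x i) (l i)) * b i) :=
          lintegral_rpow_eq_sum_mul_setLAverage hr.le S (fun i _ => measurableSet_cube _ _)
            (fun i _ => volume_cube_ne_top _ _) a fun _ => rfl
      _ ≤ ∑ i ∈ S, a i * (η⁻¹ * volume (E i) * b i) := by
          gcongr with i hi; exact hS.volume_cube_le hη hη' hi
      _ = η⁻¹ * ∑ i ∈ S, a i * b i * volume (E i) := by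
          rw [Finset.mul_sum]; exact Finset.sum_congr rfl fun i _ => by ring
      _ ≤ η⁻¹ * (Y ^ (1 / r) * (∑ i ∈ S, b i ^ r' * volume (E i)) ^ (1 / r')) := by
          gcongr; exact inner_le_weighted_Lp_mul_Lq hrr' S a b _
      _ ≤ η⁻¹ * (Y ^ (1 / r) * (carlesonConst n r' * X) ^ (1 / r')) := by
          gcongr; exact hrr'.symm.one_div_nonneg
      _ = C * Y ^ (1 / r) * X ^ (1 / r') := by
          rw [mul_rpow_of_nonneg _ _ hrr'.symm.one_div_nonneg]; ring
  calc X ≤ (C * Y ^ (1 / r)) ^ r := le_rpow_of_le_mul_rpow hrr' hX hmain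
    _ = C ^ r * Y := by
        rw [mul_rpow_of_nonneg _ _ (by linarith), ← ENNReal.rpow_mul,
          one_div_mul_cancel (by linarith), ENNReal.rpow_one]

def sparseConst (n : ℕ) (η : ℝ≥0∞) (r : ℝ) : ℝ≥0∞ :=
  if r ≤ 1 then η⁻¹ else (η⁻¹ * carlesonConst n r.conjExponent ^ (1 / r.conjExponent)) ^ r

lemma sparseConst_ne_zero (n : ℕ) (hη : η ≠ ⊤) (r : ℝ) : sparseConst n η r ≠ 0 := by
  unfold sparseConst
  split_ifs with hr
  · simpa using hη
  · have hr' := (Real.HolderConjugate.conjExponent (not_le.mp hr)).symm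
    simp [hη, carlesonConst_ne_zero, carlesonConst_ne_top n hr'.lt, hr'.pos.not_gt,
      (by linarith : ¬ r < 0)]

lemma sparseConst_ne_top (n : ℕ) (hη : η ≠ 0) {r : ℝ} (hr : 0 < r) : sparseConst n η r ≠ ⊤ := by
  unfold sparseConst
  split_ifs with hr1
  · simpa using hη
  · have hr' := (Real.HolderConjugate.conjExponent (not_le.mp hr1)).symm
    exact rpow_ne_top_of_nonneg hr.le (mul_ne_top (inv_ne_top.mpr hη)
      (rpow_ne_top_of_nonneg hr'.one_div_nonneg (carlesonConst_ne_top n hr'.lt)))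

lemma lintegral_sum_indicator_rpow_le {r : ℝ} (hr : 0 < r) (hη : η ≠ 0) (hη' : η ≠ ⊤)
    (hS : IsSparse η S x l E) (a : ι → ℝ≥0∞) :
    ∫⁻ y, (∑ i ∈ S, a i * (cube (x i) (l i)).indicator (fun _ => 1) y) ^ r
      ≤ sparseConst n η r * ∑ i ∈ S, a i ^ r * volume (E i) := by
  unfold sparseConst
  split_ifs with hr1
  · exact lintegral_sum_indicator_rpow_le_of_le_one hr hr1 hη hη' hS a
  · exact lintegral_sum_indicator_rpow_le_of_one_lt (not_le.mp hr1) hη hη' hS a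

lemma lintegral_sum_setLAverage_rpow_indicator_le {s r : ℝ} (hs : 0 < s) (hsr : s < r)
    (hη : η ≠ 0) (hη' : η ≠ ⊤) {f : (Fin n → ℝ) → ℝ≥0∞} (hf : AEMeasurable f)
    (hS : IsSparse η S x l E) :
    ∫⁻ y, (∑ i ∈ S, (⨍⁻ z in cube (x i) (l i), f z ^ s ∂volume) ^ (1 / s) *
        (cube (x i) (l i)).indicator (fun _ => 1) y) ^ r
      ≤ sparseConst n η r * carlesonConst n (r / s) * ∫⁻ y, f y ^ r := by
  calc _ ≤ sparseConst n η r * ∑ i ∈ S,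
          ((⨍⁻ z in cube (x i) (l i), f z ^ s ∂volume) ^ (1 / s)) ^ r * volume (E i) :=
        lintegral_sum_indicator_rpow_le (hs.trans hsr) hη hη' hS _
    _ = sparseConst n η r * ∑ i ∈ S,
          (⨍⁻ z in cube (x i) (l i), f z ^ s ∂volume) ^ (r / s) * volume (E i) := by
        simp only [← ENNReal.rpow_mul, one_div_mul_eq_div]
    _ ≤ sparseConst n η r * (carlesonConst n (r / s) * ∫⁻ y, (f y ^ s) ^ (r / s)) := by
        gcongr
        exact sum_setLAverage_rpow_mul_volume_le ((one_lt_div hs).mpr hsr) (hf.pow_const s)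
          hS.zero
    _ = sparseConst n η r * carlesonConst n (r / s) * ∫⁻ y, f y ^ r := by
        simp only [← ENNReal.rpow_mul, mul_div_cancel₀ r hs.ne', mul_assoc]

end Sparse

end SparseAverage

open SparseAverage

/-- for `0 < s < r < ∞`, `h ∈ L^r(ℝⁿ)` and an `η`-sparse family of cubes `Q i`,
`‖Σ_i ⟨|h|^s⟩_{Q i}^{1/s} χ_{Q i}‖_{L^r} ≲ ‖h‖_{L^r}`, with constant depending only on
`n, s, r, η`. -/
theorem sparse_average_bound (n : ℕ) (s r : ℝ) (hs : 0 < s) (hsr : s < r) (η : ℝ≥0∞)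
    (hη : 0 < η) (hη1 : η < 1) :
    ∃ C : ℝ≥0∞, 0 < C ∧ C ≠ ⊤ ∧
      ∀ (h : (Fin n → ℝ) → ℝ), MemLp h (ENNReal.ofReal r) volume →
      ∀ (ι : Type) (Q E : ι → Set (Fin n → ℝ)),
        (∀ i, IsCube (Q i)) →
        (∀ i, MeasurableSet (E i)) →
        (∀ i, E i ⊆ Q i) →
        (∀ i, η * volume (Q i) ≤ volume (E i)) →
        Pairwise (Function.onFun Disjoint E) →
        (∫⁻ x, (∑' i : ι,
            ((volume (Q i))⁻¹ * ∫⁻ y in Q i, (‖h y‖₊ : ℝ≥0∞) ^ s) ^ (1 / s) *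
              (Q i).indicator (fun _ => (1 : ℝ≥0∞)) x) ^ r) ^ (1 / r)
          ≤ C * (∫⁻ x, (‖h x‖₊ : ℝ≥0∞) ^ r) ^ (1 / r) := by
  have hr : 0 < r := hs.trans hsr
  set K := sparseConst n η r * carlesonConst n (r / s)
  have hK0 : K ≠ 0 := mul_ne_zero (sparseConst_ne_zero n hη1.ne_top r) (carlesonConst_ne_zero n _)
  have hKt : K ≠ ⊤ := mul_ne_top (sparseConst_ne_top n hη.ne' hr)
    (carlesonConst_ne_top n ((one_lt_div hs).mpr hsr))
  refine ⟨K ^ (1 / r), rpow_pos (pos_iff_ne_zero.mpr hK0) hKt,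
    rpow_ne_top_of_nonneg (by positivity) hKt, ?_⟩
  intro h hh ι Q E hQ hE hEQ hvol hdisj
  choose x l hl hQx using hQ
  obtain rfl : Q = fun i => cube (x i) (l i) := funext hQx
  have hEpos : ∀ i, 0 < volume (E i) := fun i =>
    (ENNReal.mul_pos hη.ne' (volume_cube_ne_zero _ (hl i))).trans_le (hvol i)
  have : Countable ι := countable_univ_iff.mp
    (by simpa [hEpos] using Measure.countable_meas_pos_of_disjoint_iUnion (μ := volume) hE hdisj)
  simp only [← ENNReal.div_eq_inv_mul, ← setLAverage_eq]
  rw [← ENNReal.mul_rpow_of_nonneg _ _ (by positivity)]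
  gcongr
  refine lintegral_tsum_rpow_le_of_forall_finset (fun i => ?_) hr fun S => ?_
  · exact (measurable_const.indicator (measurableSet_cube _ _)).aemeasurable.const_mul _
  · exact lintegral_sum_setLAverage_rpow_indicator_le hs hsr hη.ne' hη1.ne_top
      hh.1.aemeasurable.nnnorm.coe_nnreal_ennreal
      ⟨fun i _ => hl i, fun i _ => hE i, fun i _ => hEQ i, hdisj.set_pairwise _, fun i _ => hvol i⟩
end
end
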